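/- Uniqueness of the proxy root for the one-dimensional subspace prior: Fix C > 0, q ∈ (0,1), γ ∈ (0,1), h > 0 and c > 0, and assume the strong-signal condition γ²h⁴ > c, so that σ²(0) > 0. Then there exist ε_r > 0 and δ* ∈ (0,1) such that for all r ∈ [0, ε_r] and all δ ∈ (0, δ*), the function F(t, δ, r) := (δ + (1−δ)·A(t)) / ((1−γ)·A(t) + γ·B(t; r)) − q is strictly decreasing in t on (0, C]; in particular the equation F(t, δ, r) = 0 has at most one solution t ∈ [0, C]. -/

import Mathlib

/-!
Write `x = √t` and `z = √s > 1`, so that `A(t) = 2Φ̄(x)` and `B(t; r) = 2Φ̄(x / z)`. The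
`x`-derivative of the ratio has the sign of `δ((1−γ)φ(x) + γφ(x/z)/z) − 2γ(1−δ)ψ(x, z)` with
`ψ(x, z) = φ(x)Φ̄(x/z) − φ(x/z)Φ̄(x)/z`. Since the hazard rate `φ/Φ̄` of the normal law is
increasing, `ψ(x, z) ≥ (1 − 1/z)φ(x)Φ̄(x/z)`, which for `x ≤ √C` and `z ≥ z₁ > 1` is at least
`m = (1 − 1/z₁)φ(√C)Φ̄(√C) > 0`. As `σ²` is antitone in `r`, `s(r) ≥ s(ε_r) > 1` on `[0, ε_r]`;
then `δ < min(1/2, γm)` makes the derivative negative, so the curve is strictly decreasing on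
all of `[0, C]`, which also gives uniqueness of the root.
-/

open MeasureTheory ProbabilityTheory Filter

/-- The survival function `Φ̄` of the standard normal distribution. -/
noncomputable def stdNormSurvival (t : ℝ) : ℝ :=
  ((gaussianReal 0 1) (Set.Ici t)).toReal

/-- The survival function of the chi-squared distribution with one degree of freedom,
`A(t) = 2Φ̄(√t)` for `t ≥ 0`. -/
noncomputable def chiSqOneSurvival (t : ℝ) : ℝ := 2 * stdNormSurvival (Real.sqrt t)

/-- The alternative scale increment `σ²(r)` under the subspace prior. -/
noncomputable def sigmaSqSub (h γ c r : ℝ) : ℝ :=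
  h ^ 2 * max 0 (1 - c * (1 + r) / (γ ^ 2 * h ^ 4)) / (1 + c / (γ * h ^ 2))

/-- The subspace-prior proxy FDP curve minus the level `q`. -/
noncomputable def subspaceProxyF (h γ c q : ℝ) (t δ r : ℝ) : ℝ :=
  (δ + (1 - δ) * chiSqOneSurvival t) /
    ((1 - γ) * chiSqOneSurvival t
      + γ * chiSqOneSurvival (t / (1 + sigmaSqSub h γ c r))) - q

open Real Set

local notation "φ" => gaussianPDFReal 0 1

lemma gaussianPDFReal_zero_one (x : ℝ) : φ x = (√(2 * π))⁻¹ * exp (-x ^ 2 / 2) := by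
  simp [gaussianPDFReal]

lemma continuous_gaussianPDFReal_zero_one : Continuous φ := by
  simp only [funext gaussianPDFReal_zero_one]
  fun_prop

lemma gaussianPDFReal_zero_one_le_of_sq_le {x y : ℝ} (h : y ^ 2 ≤ x ^ 2) : φ x ≤ φ y := by
  simp only [gaussianPDFReal_zero_one]
  gcongr

lemma gaussianPDFReal_zero_one_le_one (x : ℝ) : φ x ≤ 1 := by
  have h2π : 1 ≤ √(2 * π) := one_le_sqrt.2 (by nlinarith [pi_gt_three])
  calc φ x ≤ φ 0 := gaussianPDFReal_zero_one_le_of_sq_le (by simp [sq_nonneg])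
    _ = (√(2 * π))⁻¹ := by simp [gaussianPDFReal_zero_one]
    _ ≤ 1 := inv_le_one_of_one_le₀ h2π

lemma stdNormSurvival_eq_integral (t : ℝ) : stdNormSurvival t = ∫ x in Ioi t, φ x := by
  rw [stdNormSurvival, gaussianReal_apply_eq_integral 0 one_ne_zero, ENNReal.toReal_ofReal
    (setIntegral_nonneg measurableSet_Ici fun x _ => gaussianPDFReal_nonneg 0 1 x),
    integral_Ici_eq_integral_Ioi]

lemma stdNormSurvival_pos (t : ℝ) : 0 < stdNormSurvival t := by
  rw [stdNormSurvival_eq_integral, setIntegral_pos_iff_support_of_nonneg_ae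
    (ae_of_all _ fun x => gaussianPDFReal_nonneg 0 1 x)
    (integrable_gaussianPDFReal 0 1).integrableOn]
  simp [Function.support, fun x => (gaussianPDFReal_pos 0 1 x one_ne_zero).ne']

lemma hasDerivAt_stdNormSurvival (t : ℝ) : HasDerivAt stdNormSurvival (-φ t) t := by
  have hφint := (integrable_gaussianPDFReal 0 1).integrableOn (s := Ioi 0)
  have hpdf : HasDerivAt (fun x => ∫ u in (0 : ℝ)..x, φ u) (φ t) t :=
    intervalIntegral.integral_hasDerivAt_right
      (integrable_gaussianPDFReal 0 1).intervalIntegrable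
      (continuous_gaussianPDFReal_zero_one.stronglyMeasurableAtFilter _ _)
      continuous_gaussianPDFReal_zero_one.continuousAt
  have hsurv (x : ℝ) : stdNormSurvival x = stdNormSurvival 0 - ∫ u in (0 : ℝ)..x, φ u := by
    rw [stdNormSurvival_eq_integral, stdNormSurvival_eq_integral,
      ← intervalIntegral.integral_Ioi_sub_Ioi' hφint (integrable_gaussianPDFReal 0 1).integrableOn]
    ring
  have h := (hasDerivAt_const t (stdNormSurvival 0)).sub hpdf
  rw [zero_sub] at h
  exact h.congr_of_eventuallyEq (Eventually.of_forall hsurv)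

lemma stdNormSurvival_strictAnti : StrictAnti stdNormSurvival :=
  strictAnti_of_hasDerivAt_neg hasDerivAt_stdNormSurvival
    fun x => neg_neg_of_pos (gaussianPDFReal_pos 0 1 x one_ne_zero)

lemma integral_Ioi_comp_add_right {E : Type*} [NormedAddCommGroup E] [NormedSpace ℝ E]
    (f : ℝ → E) (a c : ℝ) :
    ∫ u in Ioi a, f (u + c) = ∫ u in Ioi (a + c), f u := by
  have h := (measurePreserving_add_right (volume : Measure ℝ) c).setIntegral_preimage_emb
    (MeasurableEquiv.addRight c).measurableEmbedding f (Ioi (a + c))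
  rwa [preimage_add_const_Ioi, add_sub_cancel_right] at h

/-- The hazard rate `φ / Φ̄` of the standard normal distribution is increasing. -/
lemma gaussianPDFReal_mul_stdNormSurvival_le {x y : ℝ} (hyx : y ≤ x) :
    φ y * stdNormSurvival x ≤ φ x * stdNormSurvival y := by
  have hφint := (integrable_gaussianPDFReal 0 1).integrableOn (s := Ioi y)
  rw [stdNormSurvival_eq_integral, stdNormSurvival_eq_integral, ← add_sub_cancel y x,
    ← integral_Ioi_comp_add_right, ← integral_const_mul, ← integral_const_mul, add_sub_cancel]
  refine setIntegral_mono_on ?_ (hφint.const_mul _) measurableSet_Ioi fun u hu => ?_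
  · exact (((integrable_gaussianPDFReal 0 1).comp_add_right _).const_mul _).integrableOn
  · have hcross : 0 ≤ (x - y) * (u - y) := mul_nonneg (sub_nonneg.2 hyx) (sub_nonneg.2 hu.le)
    simp only [gaussianPDFReal_zero_one]
    rw [mul_mul_mul_comm, mul_mul_mul_comm _ (exp _), ← exp_add, ← exp_add]
    exact mul_le_mul_of_nonneg_left (exp_le_exp.2 (by nlinarith)) (by positivity)

noncomputable def normHazardGap (z x : ℝ) : ℝ :=
  φ x * stdNormSurvival (x / z) - φ (x / z) * stdNormSurvival x / z

lemma one_sub_inv_mul_le_normHazardGap {x z : ℝ} (hx : 0 ≤ x) (hz : 1 ≤ z) :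
    (1 - z⁻¹) * (φ x * stdNormSurvival (x / z)) ≤ normHazardGap z x := by
  have hhazard := gaussianPDFReal_mul_stdNormSurvival_le (div_le_self hx hz)
  have hscaled : φ (x / z) * stdNormSurvival x / z ≤ z⁻¹ * (φ x * stdNormSurvival (x / z)) := by
    rw [div_eq_inv_mul]
    exact mul_le_mul_of_nonneg_left hhazard (inv_nonneg.2 (by linarith))
  rw [normHazardGap, sub_mul, one_mul]
  linarith

lemma one_sub_inv_mul_le_normHazardGap_of_le {x z z₁ X : ℝ} (hz₁ : 1 ≤ z₁) (hz : z₁ ≤ z)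
    (hx : 0 ≤ x) (hxX : x ≤ X) : (1 - z₁⁻¹) * (φ X * stdNormSurvival X) ≤ normHazardGap z x := by
  have hz₁z : 1 - z₁⁻¹ ≤ 1 - z⁻¹ := by gcongr
  have hpdf : φ X ≤ φ x := gaussianPDFReal_zero_one_le_of_sq_le (pow_le_pow_left₀ hx hxX 2)
  have hsurv : stdNormSurvival X ≤ stdNormSurvival (x / z) :=
    stdNormSurvival_strictAnti.antitone ((div_le_self hx (hz₁.trans hz)).trans hxX)
  calc (1 - z₁⁻¹) * (φ X * stdNormSurvival X)
      ≤ (1 - z⁻¹) * (φ x * stdNormSurvival (x / z)) :=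
        mul_le_mul hz₁z (mul_le_mul hpdf hsurv (stdNormSurvival_pos X).le
          (gaussianPDFReal_nonneg 0 1 x))
          (mul_nonneg (gaussianPDFReal_nonneg 0 1 X) (stdNormSurvival_pos X).le)
          (sub_nonneg.2 (inv_le_one_of_one_le₀ (hz₁.trans hz)))
    _ ≤ normHazardGap z x := one_sub_inv_mul_le_normHazardGap hx (hz₁.trans hz)

noncomputable def proxyDenom (γ z x : ℝ) : ℝ :=
  (1 - γ) * (2 * stdNormSurvival x) + γ * (2 * stdNormSurvival (x / z))

/-- `subspaceProxyF + q` in the variables `x = √t` and `z = √s`. -/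
noncomputable def proxyRatio (γ δ z x : ℝ) : ℝ :=
  (δ + (1 - δ) * (2 * stdNormSurvival x)) / proxyDenom γ z x

section ProxyRatio

variable {γ δ z : ℝ}

lemma proxyDenom_pos (hγ0 : 0 < γ) (hγ1 : γ ≤ 1) (z x : ℝ) : 0 < proxyDenom γ z x := by
  have := stdNormSurvival_pos x
  have := stdNormSurvival_pos (x / z)
  exact add_pos_of_nonneg_of_pos (mul_nonneg (sub_nonneg.2 hγ1) (by positivity)) (by positivity)

lemma hasDerivAt_proxyRatio (hγ0 : 0 < γ) (hγ1 : γ ≤ 1) (hz : z ≠ 0) (x : ℝ) :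
    HasDerivAt (proxyRatio γ δ z)
      (2 * (δ * ((1 - γ) * φ x + γ * (φ (x / z) / z)) - 2 * γ * (1 - δ) * normHazardGap z x)
        / proxyDenom γ z x ^ 2) x := by
  have hS := hasDerivAt_stdNormSurvival x
  have hSz := (hasDerivAt_stdNormSurvival (x / z)).comp x ((hasDerivAt_id x).div_const z)
  have hN := ((hS.const_mul 2).const_mul (1 - δ)).const_add δ
  have hD : HasDerivAt (proxyDenom γ z) _ x :=
    ((hS.const_mul 2).const_mul (1 - γ)).add ((hSz.const_mul 2).const_mul γ)
  refine (hN.div hD (proxyDenom_pos hγ0 hγ1 z x).ne').congr_deriv ?_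
  rw [normHazardGap, proxyDenom]
  field_simp
  ring

lemma proxyWeight_le_one (hγ0 : 0 ≤ γ) (hγ1 : γ ≤ 1) (hz : 1 ≤ z) (x : ℝ) :
    (1 - γ) * φ x + γ * (φ (x / z) / z) ≤ 1 := by
  have h1 := gaussianPDFReal_zero_one_le_one x
  have h2 : φ (x / z) / z ≤ 1 :=
    div_le_one_of_le₀ ((gaussianPDFReal_zero_one_le_one _).trans hz) (by linarith)
  nlinarith

end ProxyRatio

lemma exists_proxyRatio_strictAntiOn {γ z₁ : ℝ} (hγ0 : 0 < γ) (hγ1 : γ ≤ 1) (hz₁ : 1 < z₁)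
    (X : ℝ) : ∃ δstar ∈ Ioo (0 : ℝ) 1, ∀ δ ∈ Ioo 0 δstar, ∀ z, z₁ ≤ z →
      StrictAntiOn (proxyRatio γ δ z) (Icc 0 X) := by
  set m := (1 - z₁⁻¹) * (φ X * stdNormSurvival X)
  have hm : 0 < m := by
    have := gaussianPDFReal_pos 0 1 X one_ne_zero
    have := stdNormSurvival_pos X
    have : 0 < 1 - z₁⁻¹ := sub_pos.2 (inv_lt_one_of_one_lt₀ hz₁)
    positivity
  refine ⟨min (1 / 2) (γ * m), ⟨by positivity, (min_le_left _ _).trans_lt (by norm_num)⟩,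
    fun δ hδ z hz => ?_⟩
  have hz0 : z ≠ 0 := by linarith
  refine strictAntiOn_of_hasDerivWithinAt_neg (convex_Icc 0 X)
    (fun x _ => (hasDerivAt_proxyRatio hγ0 hγ1 hz0 x).continuousAt.continuousWithinAt)
    (fun x _ => (hasDerivAt_proxyRatio hγ0 hγ1 hz0 x).hasDerivWithinAt) fun x hx => ?_
  rw [interior_Icc] at hx
  refine div_neg_of_neg_of_pos ?_ (pow_pos (proxyDenom_pos hγ0 hγ1 z x) 2)
  have hψ := one_sub_inv_mul_le_normHazardGap_of_le hz₁.le hz hx.1.le hx.2.le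
  have hw := proxyWeight_le_one hγ0.le hγ1 (hz₁.le.trans hz) x
  have hδ₁ : δ < 1 / 2 := hδ.2.trans_le (min_le_left _ _)
  have hδm : δ < γ * m := hδ.2.trans_le (min_le_right _ _)
  have hψ0 : 0 < normHazardGap z x := hm.trans_le hψ
  have hδw := mul_le_of_le_one_right hδ.1.le hw
  have hγψ : γ * m ≤ γ * normHazardGap z x := by gcongr
  nlinarith [mul_pos hγ0 hψ0]

section Scale

variable {h γ c : ℝ}

lemma sigmaSqSub_antitone (hγ : 0 ≤ γ) (hc : 0 ≤ c) : Antitone (sigmaSqSub h γ c) := by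
  intro r r' hrr'
  unfold sigmaSqSub
  gcongr

lemma sigmaSqSub_pos {r : ℝ} (hγ : 0 < γ) (hh : h ≠ 0) (hc : 0 ≤ c)
    (hr : c * (1 + r) < γ ^ 2 * h ^ 4) : 0 < sigmaSqSub h γ c r := by
  have hmax : 0 < max 0 (1 - c * (1 + r) / (γ ^ 2 * h ^ 4)) :=
    lt_max_of_lt_right (sub_pos.2 ((div_lt_one (by positivity)).2 hr))
  unfold sigmaSqSub
  positivity

end Scale

lemma subspaceProxyF_eq_proxyRatio {h γ c q t δ r : ℝ} (hs : 0 ≤ 1 + sigmaSqSub h γ c r) :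
    subspaceProxyF h γ c q t δ r = proxyRatio γ δ √(1 + sigmaSqSub h γ c r) √t - q := by
  rw [subspaceProxyF, proxyRatio, proxyDenom, chiSqOneSurvival, chiSqOneSurvival, sqrt_div' t hs]

theorem subspace_proxy_root_unique_general
    (C q γ h c : ℝ)
    (hγ : γ ∈ Set.Ioo (0 : ℝ) 1) (hh : 0 < h) (hc : 0 < c)
    (hstrong : c < γ ^ 2 * h ^ 4) :
    ∃ εr > (0 : ℝ), ∃ δstar ∈ Set.Ioo (0 : ℝ) 1,
      ∀ r ∈ Set.Icc (0 : ℝ) εr, ∀ δ ∈ Set.Ioo (0 : ℝ) δstar,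
        StrictAntiOn (fun t => subspaceProxyF h γ c q t δ r) (Set.Ioc 0 C) ∧
        ∀ t₁ ∈ Set.Icc (0 : ℝ) C, ∀ t₂ ∈ Set.Icc (0 : ℝ) C,
          subspaceProxyF h γ c q t₁ δ r = 0 → subspaceProxyF h γ c q t₂ δ r = 0 → t₁ = t₂ := by
  obtain ⟨hγ0, hγ1⟩ := hγ
  set εr := (γ ^ 2 * h ^ 4 - c) / (2 * c)
  have hεr : 0 < εr := div_pos (by linarith) (by linarith)
  have hcεr : c * εr = (γ ^ 2 * h ^ 4 - c) / 2 := by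
    simp only [εr]
    field_simp
  have hσ : 0 < sigmaSqSub h γ c εr := sigmaSqSub_pos hγ0 hh.ne' hc.le (by linarith)
  obtain ⟨δstar, hδstar, hanti⟩ := exists_proxyRatio_strictAntiOn hγ0 hγ1.le
    ((lt_sqrt zero_le_one).2 (by linarith : (1 : ℝ) ^ 2 < 1 + sigmaSqSub h γ c εr)) √C
  refine ⟨εr, hεr, δstar, hδstar, fun r hr δ hδ => ?_⟩
  have hs : 1 + sigmaSqSub h γ c εr ≤ 1 + sigmaSqSub h γ c r := by
    gcongr 1 + ?_
    exact sigmaSqSub_antitone hγ0.le hc.le hr.2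
  have hratio := (hanti δ hδ _ (sqrt_le_sqrt hs)).comp_strictMonoOn
    (strictMonoOn_sqrt.mono Icc_subset_Ici_self) fun t ht => ⟨sqrt_nonneg t, sqrt_le_sqrt ht.2⟩
  have hF : StrictAntiOn (fun t => subspaceProxyF h γ c q t δ r) (Icc 0 C) := by
    intro t₁ ht₁ t₂ ht₂ ht
    simp only [subspaceProxyF_eq_proxyRatio (by linarith : 0 ≤ 1 + sigmaSqSub h γ c r)]
    exact sub_lt_sub_right (hratio ht₁ ht₂ ht) q
  exact ⟨hF.mono Ioc_subset_Icc_self,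
    fun t₁ ht₁ t₂ ht₂ h₁ h₂ => hF.injOn ht₁ ht₂ (h₁.trans h₂.symm)⟩

theorem subspace_proxy_root_unique
    (C q γ h c : ℝ) (hC : 0 < C) (hq : q ∈ Set.Ioo (0 : ℝ) 1)
    (hγ : γ ∈ Set.Ioo (0 : ℝ) 1) (hh : 0 < h) (hc : 0 < c)
    (hstrong : c < γ ^ 2 * h ^ 4) :
    ∃ εr > (0 : ℝ), ∃ δstar ∈ Set.Ioo (0 : ℝ) 1,
      ∀ r ∈ Set.Icc (0 : ℝ) εr, ∀ δ ∈ Set.Ioo (0 : ℝ) δstar,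
        StrictAntiOn (fun t => subspaceProxyF h γ c q t δ r) (Set.Ioc 0 C) ∧
        ∀ t₁ ∈ Set.Icc (0 : ℝ) C, ∀ t₂ ∈ Set.Icc (0 : ℝ) C,
          subspaceProxyF h γ c q t₁ δ r = 0 → subspaceProxyF h γ c q t₂ δ r = 0 → t₁ = t₂ :=
  subspace_proxy_root_unique_general C q γ h c hγ hh hc hstrong
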